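/- Let K be a field, A a K-vector space and (μ_s)_{s∈ℕ} an associative deformation order by order. Let E be a K-vector space, r ∈ ℕ, and ρ_0, …, ρ_r K-linear maps A → End_K(E) forming a right-module deformation up to order r: for all n ≤ r and a,b ∈ A, Σ_{s=0}^{n} ρ_s(μ_{n−s}(a,b)) = Σ_{s=0}^{n} ρ_s(b) ∘ ρ_{n−s}(a). Define R_r : A × A → End_K(E) by R_r(a,b) = Σ_{s=0}^{r} ρ_s(μ_{r+1−s}(a,b)) − Σ_{s=1}^{r} ρ_s(b) ∘ ρ_{r+1−s}(a). Then: (i) for any K-linear ρ_{r+1} : A → End_K(E), the maps ρ_0, …, ρ_{r+1} form a right-module deformation up to order r+1 if and only if ρ_{r+1}(b) ∘ ρ_0(a) − ρ_{r+1}(μ_0(a,b)) + ρ_0(b) ∘ ρ_{r+1}(a) = R_r(a,b) for all a,b; and (ii) δR_r = 0, i.e. R_r(b,c) ∘ ρ_0(a) − R_r(μ_0(a,b), c) + R_r(a, μ_0(b,c)) − ρ_0(c) ∘ R_r(a,b) = 0 for all a,b,c ∈ A. -/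
import Mathlib


namespace Stmt9

variable {K A E : Type*} [Field K] [AddCommGroup A] [Module K A]
  [AddCommGroup E] [Module K E]

/-- The condition expressing associativity of a formal deformation `μ = ∑ λ^s μ_s`
in order `n`. -/
def AssocOrder {A : Type*} [AddCommGroup A] (μ : ℕ → A → A → A) (n : ℕ) : Prop :=
  ∀ a b c : A,
    ∑ s ∈ Finset.range (n+1), (μ s (μ (n-s) a b) c - μ s a (μ (n-s) b c)) = 0

/-- The obstruction
`R_r(a,b) = ∑_{s=0}^{r} ρ_s(μ_{r+1−s}(a,b)) − ∑_{s=1}^{r} ρ_s(b) ∘ ρ_{r+1−s}(a)`. -/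
def Robs (μ : ℕ → A →ₗ[K] A →ₗ[K] A) (ρ : ℕ → A →ₗ[K] (E →ₗ[K] E)) (r : ℕ)
    (a b : A) : E →ₗ[K] E :=
  (∑ s ∈ Finset.range (r+1), ρ s (μ (r+1-s) a b))
    - ∑ s ∈ Finset.Icc 1 r, (ρ s b) ∘ₗ (ρ (r+1-s) a)

section Helpers

variable {M : Type*} [AddCommMonoid M]

private lemma range_sub_filter (N i : ℕ) (g : ℕ → M) :
    ∑ j ∈ Finset.range (N + 1 - i), g j
      = ∑ j ∈ Finset.range (N + 1), if i + j ≤ N then g j else 0 := by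
  have hset : Finset.range (N + 1 - i)
      = (Finset.range (N + 1)).filter (fun j => i + j ≤ N) := by
    ext j; simp only [Finset.mem_range, Finset.mem_filter]; omega
  rw [hset, Finset.sum_filter]

private lemma tri_comm (N : ℕ) (f : ℕ → ℕ → M) :
    ∑ i ∈ Finset.range (N + 1), ∑ j ∈ Finset.range (N + 1 - i), f i j
      = ∑ j ∈ Finset.range (N + 1), ∑ i ∈ Finset.range (N + 1 - j), f i j := by
  have h1 : ∀ i, ∑ j ∈ Finset.range (N + 1 - i), f i j
      = ∑ j ∈ Finset.range (N + 1), if i + j ≤ N then f i j else 0 :=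
    fun i => range_sub_filter N i _
  have h2 : ∀ j, ∑ i ∈ Finset.range (N + 1 - j), f i j
      = ∑ i ∈ Finset.range (N + 1), if i + j ≤ N then f i j else 0 := by
    intro j
    rw [range_sub_filter N j (fun i => f i j)]
    exact Finset.sum_congr rfl fun i _ => by
      congr 1
      exact propext ⟨by omega, by omega⟩
  simp_rw [h1, h2]
  exact Finset.sum_comm

private lemma sum_reflect (n : ℕ) (f : ℕ → M) :
    ∑ j ∈ Finset.range (n + 1), f (n - j) = ∑ j ∈ Finset.range (n + 1), f j := by
  have := Finset.sum_range_reflect f (n + 1)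
  simpa using this

private lemma reflect_pair (n : ℕ) (f : ℕ → ℕ → M) :
    ∑ t ∈ Finset.range (n + 1), f (n - t) t
      = ∑ t ∈ Finset.range (n + 1), f t (n - t) := by
  rw [← sum_reflect n (fun t => f t (n - t))]
  refine Finset.sum_congr rfl fun t ht => ?_
  have := Finset.mem_range.mp ht
  congr 1
  omega

private lemma icc_sum (r : ℕ) (g : ℕ → M) :
    ∑ s ∈ Finset.Icc 1 r, g s = ∑ s ∈ Finset.range r, g (s + 1) := by
  rw [← Finset.Ico_add_one_right_eq_Icc, Finset.sum_Ico_eq_sum_range]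
  simp [Nat.add_comm]

end Helpers

private lemma sumLcomp {ι : Type*} (s : Finset ι) (f : ι → E →ₗ[K] E) (g : E →ₗ[K] E) :
    (∑ i ∈ s, f i) ∘ₗ g = ∑ i ∈ s, (f i ∘ₗ g) := by
  ext x; simp [LinearMap.sum_apply]

private lemma compLsum {ι : Type*} (s : Finset ι) (g : E →ₗ[K] E) (f : ι → E →ₗ[K] E) :
    g ∘ₗ (∑ i ∈ s, f i) = ∑ i ∈ s, (g ∘ₗ f i) := by
  ext x; simp [LinearMap.sum_apply, map_sum]

private def tr (ρ : ℕ → A →ₗ[K] (E →ₗ[K] E)) (r : ℕ) (s : ℕ) : A →ₗ[K] (E →ₗ[K] E) :=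
  if s = r + 1 then 0 else ρ s

private lemma tr_key (r : ℕ) (μ : ℕ → A →ₗ[K] A →ₗ[K] A)
    (ρ : ℕ → A →ₗ[K] (E →ₗ[K] E))
    (hρ : ∀ n ≤ r, ∀ a b : A,
      ∑ s ∈ Finset.range (n+1), ρ s (μ (n-s) a b)
        = ∑ s ∈ Finset.range (n+1), (ρ s b) ∘ₗ (ρ (n-s) a)) :
    ∀ n ≤ r + 1, ∀ a b : A,
      ∑ s ∈ Finset.range (n+1), (tr ρ r s b) ∘ₗ (tr ρ r (n-s) a)
        = (∑ s ∈ Finset.range (n+1), tr ρ r s (μ (n-s) a b))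
            - (if n = r+1 then Robs μ ρ r a b else 0) := by
  intro n hn a b
  rcases Nat.lt_or_ge n (r+1) with h | h
  · rw [if_neg (by omega), sub_zero]
    have hL : ∑ s ∈ Finset.range (n+1), (tr ρ r s b) ∘ₗ (tr ρ r (n-s) a)
        = ∑ s ∈ Finset.range (n+1), (ρ s b) ∘ₗ (ρ (n-s) a) := by
      refine Finset.sum_congr rfl fun s hs => ?_
      have hs' := Finset.mem_range.mp hs
      rw [tr, tr, if_neg (by omega), if_neg (by omega)]
    have hR : ∑ s ∈ Finset.range (n+1), tr ρ r s (μ (n-s) a b)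
        = ∑ s ∈ Finset.range (n+1), ρ s (μ (n-s) a b) := by
      refine Finset.sum_congr rfl fun s hs => ?_
      have hs' := Finset.mem_range.mp hs
      rw [tr, if_neg (by omega)]
    rw [hL, hR, hρ n (by omega) a b]
  · have hn' : n = r + 1 := by omega
    subst hn'
    rw [if_pos rfl]
    have hL : ∑ s ∈ Finset.range (r+1+1), (tr ρ r s b) ∘ₗ (tr ρ r (r+1-s) a)
        = ∑ s ∈ Finset.range r, (ρ (s+1) b) ∘ₗ (ρ (r+1-(s+1)) a) := by
      rw [Finset.sum_range_succ]
      rw [show tr ρ r (r+1) b ∘ₗ tr ρ r (r+1-(r+1)) a = 0 by simp [tr]]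
      rw [add_zero, Finset.sum_range_succ']
      rw [show tr ρ r 0 b ∘ₗ tr ρ r (r+1-0) a = 0 by simp [tr]]
      rw [add_zero]
      refine Finset.sum_congr rfl fun s hs => ?_
      have hs' := Finset.mem_range.mp hs
      rw [tr, tr, if_neg (by omega), if_neg (by omega)]
    have hR : ∑ s ∈ Finset.range (r+1+1), tr ρ r s (μ (r+1-s) a b)
        = ∑ s ∈ Finset.range (r+1), ρ s (μ (r+1-s) a b) := by
      rw [Finset.sum_range_succ]
      rw [show tr ρ r (r+1) (μ (r+1-(r+1)) a b) = 0 by simp [tr]]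
      rw [add_zero]
      refine Finset.sum_congr rfl fun s hs => ?_
      have hs' := Finset.mem_range.mp hs
      rw [tr, if_neg (by omega)]
    rw [hL, hR, Robs, sub_sub_cancel, icc_sum]

private lemma cocycle (r : ℕ) (μ : ℕ → A →ₗ[K] A →ₗ[K] A)
    (hμ : ∀ n, AssocOrder (fun s x y => μ s x y) n)
    (ρ : ℕ → A →ₗ[K] (E →ₗ[K] E))
    (hρ : ∀ n ≤ r, ∀ a b : A,
      ∑ s ∈ Finset.range (n+1), ρ s (μ (n-s) a b)
        = ∑ s ∈ Finset.range (n+1), (ρ s b) ∘ₗ (ρ (n-s) a)) :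
    ∀ a b c : A,
      (Robs μ ρ r b c) ∘ₗ (ρ 0 a) - Robs μ ρ r (μ 0 a b) c
        + Robs μ ρ r a (μ 0 b c) - (ρ 0 c) ∘ₗ (Robs μ ρ r a b) = 0 := by
  intro a b c
  have key := tr_key r μ ρ hρ
  set P : ℕ → A →ₗ[K] (E →ₗ[K] E) := tr ρ r with hPdef
  have hP0 : P 0 = ρ 0 := by simp [hPdef, tr]
  set R : A → A → E →ₗ[K] E := Robs μ ρ r with hRdef
  -- first evaluation of the triple sum
  have eqI : ∑ s ∈ Finset.range (r+1+1), ∑ t ∈ Finset.range (r+1+1-s),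
        (P (r+1-s-t) c ∘ₗ P t b) ∘ₗ P s a
      = (∑ u ∈ Finset.range (r+1+1), ∑ s ∈ Finset.range (r+1+1-u),
          P s (μ (r+1-u-s) a (μ u b c)))
        - R a (μ 0 b c) - (R b c) ∘ₗ P 0 a := by
    have step1 : ∑ s ∈ Finset.range (r+1+1), ∑ t ∈ Finset.range (r+1+1-s),
          (P (r+1-s-t) c ∘ₗ P t b) ∘ₗ P s a
        = ∑ s ∈ Finset.range (r+1+1),
            (((∑ t ∈ Finset.range (r+1+1-s), P t (μ (r+1-s-t) b c))
              - (if r+1-s = r+1 then R b c else 0)) ∘ₗ P s a) := by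
      refine Finset.sum_congr rfl fun s hs => ?_
      have hs' := Finset.mem_range.mp hs
      rw [← sumLcomp]
      congr 1
      rw [show r+1+1-s = (r+1-s)+1 from by omega]
      exact (reflect_pair (r+1-s) (fun x y => P x c ∘ₗ P y b)).trans
        (key (r+1-s) (by omega) b c)
    have step2 : ∑ s ∈ Finset.range (r+1+1),
            (((∑ t ∈ Finset.range (r+1+1-s), P t (μ (r+1-s-t) b c))
              - (if r+1-s = r+1 then R b c else 0)) ∘ₗ P s a)
        = (∑ s ∈ Finset.range (r+1+1), ∑ t ∈ Finset.range (r+1+1-s),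
              P t (μ (r+1-s-t) b c) ∘ₗ P s a)
          - (R b c) ∘ₗ P 0 a := by
      have hsplit : ∀ s ∈ Finset.range (r+1+1),
          ((∑ t ∈ Finset.range (r+1+1-s), P t (μ (r+1-s-t) b c))
            - (if r+1-s = r+1 then R b c else 0)) ∘ₗ P s a
          = (∑ t ∈ Finset.range (r+1+1-s), P t (μ (r+1-s-t) b c) ∘ₗ P s a)
            - (if r+1-s = r+1 then R b c else 0) ∘ₗ P s a := by
        intro s hs; rw [LinearMap.sub_comp, sumLcomp]
      rw [Finset.sum_congr rfl hsplit, Finset.sum_sub_distrib]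
      congr 1
      rw [Finset.sum_eq_single 0]
      · simp
      · intro s hs hs0
        rw [if_neg (by have := Finset.mem_range.mp hs; omega)]
        exact LinearMap.zero_comp _
      · intro h0; exact absurd (Finset.mem_range.mpr (by omega)) h0
    have step3 : ∑ s ∈ Finset.range (r+1+1), ∑ t ∈ Finset.range (r+1+1-s),
            P t (μ (r+1-s-t) b c) ∘ₗ P s a
        = ∑ u ∈ Finset.range (r+1+1), ∑ s ∈ Finset.range (r+1+1-u),
            P (r+1-u-s) (μ u b c) ∘ₗ P s a := by
      have hrefl : ∀ s ∈ Finset.range (r+1+1),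
          ∑ t ∈ Finset.range (r+1+1-s), P t (μ (r+1-s-t) b c) ∘ₗ P s a
          = ∑ t ∈ Finset.range (r+1+1-s), P (r+1-s-t) (μ t b c) ∘ₗ P s a := by
        intro s hs
        have hs' := Finset.mem_range.mp hs
        rw [show r+1+1-s = (r+1-s)+1 from by omega]
        exact (reflect_pair (r+1-s) (fun x y => P x (μ y b c) ∘ₗ P s a)).symm
      rw [Finset.sum_congr rfl hrefl]
      refine (tri_comm (r+1) (fun s t => P (r+1-s-t) (μ t b c) ∘ₗ P s a)).trans ?_
      refine Finset.sum_congr rfl fun u hu => Finset.sum_congr rfl fun s hs => ?_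
      rw [show r+1-s-u = r+1-u-s from by omega]
    have step4 : ∑ u ∈ Finset.range (r+1+1), ∑ s ∈ Finset.range (r+1+1-u),
            P (r+1-u-s) (μ u b c) ∘ₗ P s a
        = (∑ u ∈ Finset.range (r+1+1), ∑ s ∈ Finset.range (r+1+1-u),
              P s (μ (r+1-u-s) a (μ u b c)))
          - R a (μ 0 b c) := by
      have hinner : ∀ u ∈ Finset.range (r+1+1),
          ∑ s ∈ Finset.range (r+1+1-u), P (r+1-u-s) (μ u b c) ∘ₗ P s a
          = (∑ s ∈ Finset.range (r+1+1-u), P s (μ (r+1-u-s) a (μ u b c)))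
            - (if r+1-u = r+1 then R a (μ u b c) else 0) := by
        intro u hu
        have hu' := Finset.mem_range.mp hu
        rw [show r+1+1-u = (r+1-u)+1 from by omega]
        exact (reflect_pair (r+1-u) (fun x y => P x (μ u b c) ∘ₗ P y a)).trans
          (key (r+1-u) (by omega) a (μ u b c))
      rw [Finset.sum_congr rfl hinner, Finset.sum_sub_distrib]
      congr 1
      rw [Finset.sum_eq_single 0]
      · simp
      · intro u hu hu0
        exact if_neg (by have := Finset.mem_range.mp hu; omega)
      · intro h0; exact absurd (Finset.mem_range.mpr (by omega)) h0
    rw [step1, step2, step3, step4]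
  -- second evaluation of the triple sum
  have eqII : ∑ s ∈ Finset.range (r+1+1), ∑ t ∈ Finset.range (r+1+1-s),
        (P (r+1-s-t) c ∘ₗ P t b) ∘ₗ P s a
      = (∑ t ∈ Finset.range (r+1+1), ∑ u ∈ Finset.range (r+1+1-t),
          P u (μ (r+1-t-u) (μ t a b) c))
        - R (μ 0 a b) c - P 0 c ∘ₗ R a b := by
    have stepB1 : ∑ s ∈ Finset.range (r+1+1), ∑ t ∈ Finset.range (r+1+1-s),
          (P (r+1-s-t) c ∘ₗ P t b) ∘ₗ P s a
        = ∑ u ∈ Finset.range (r+1+1), ∑ s ∈ Finset.range (r+1+1-u),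
            P u c ∘ₗ (P (r+1-u-s) b ∘ₗ P s a) := by
      have hrefl : ∀ s ∈ Finset.range (r+1+1),
          ∑ t ∈ Finset.range (r+1+1-s), (P (r+1-s-t) c ∘ₗ P t b) ∘ₗ P s a
          = ∑ t ∈ Finset.range (r+1+1-s), P t c ∘ₗ (P (r+1-s-t) b ∘ₗ P s a) := by
        intro s hs
        have hs' := Finset.mem_range.mp hs
        have hassoc : ∀ t ∈ Finset.range (r+1+1-s),
            (P (r+1-s-t) c ∘ₗ P t b) ∘ₗ P s a
            = P (r+1-s-t) c ∘ₗ (P t b ∘ₗ P s a) := fun t _ =>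
          LinearMap.comp_assoc _ _ _
        rw [Finset.sum_congr rfl hassoc, show r+1+1-s = (r+1-s)+1 from by omega]
        exact reflect_pair (r+1-s) (fun x y => P x c ∘ₗ (P y b ∘ₗ P s a))
      rw [Finset.sum_congr rfl hrefl]
      refine (tri_comm (r+1) (fun s t => P t c ∘ₗ (P (r+1-s-t) b ∘ₗ P s a))).trans ?_
      refine Finset.sum_congr rfl fun u hu => Finset.sum_congr rfl fun s hs => ?_
      rw [show r+1-s-u = r+1-u-s from by omega]
    have stepB2 : ∑ u ∈ Finset.range (r+1+1), ∑ s ∈ Finset.range (r+1+1-u),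
            P u c ∘ₗ (P (r+1-u-s) b ∘ₗ P s a)
        = (∑ u ∈ Finset.range (r+1+1), ∑ s ∈ Finset.range (r+1+1-u),
              P u c ∘ₗ P s (μ (r+1-u-s) a b))
          - P 0 c ∘ₗ R a b := by
      have hinner : ∀ u ∈ Finset.range (r+1+1),
          ∑ s ∈ Finset.range (r+1+1-u), P u c ∘ₗ (P (r+1-u-s) b ∘ₗ P s a)
          = (∑ s ∈ Finset.range (r+1+1-u), P u c ∘ₗ P s (μ (r+1-u-s) a b))
            - P u c ∘ₗ (if r+1-u = r+1 then R a b else 0) := by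
        intro u hu
        have hu' := Finset.mem_range.mp hu
        rw [← compLsum, ← compLsum, ← LinearMap.comp_sub]
        congr 1
        rw [show r+1+1-u = (r+1-u)+1 from by omega]
        exact (reflect_pair (r+1-u) (fun x y => P x b ∘ₗ P y a)).trans
          (key (r+1-u) (by omega) a b)
      rw [Finset.sum_congr rfl hinner, Finset.sum_sub_distrib]
      congr 1
      rw [Finset.sum_eq_single 0]
      · simp
      · intro u hu hu0
        rw [if_neg (by have := Finset.mem_range.mp hu; omega)]
        exact LinearMap.comp_zero _
      · intro h0; exact absurd (Finset.mem_range.mpr (by omega)) h0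
    have stepB3 : ∑ u ∈ Finset.range (r+1+1), ∑ s ∈ Finset.range (r+1+1-u),
            P u c ∘ₗ P s (μ (r+1-u-s) a b)
        = ∑ t ∈ Finset.range (r+1+1), ∑ u ∈ Finset.range (r+1+1-t),
            P u c ∘ₗ P (r+1-t-u) (μ t a b) := by
      have hrefl : ∀ u ∈ Finset.range (r+1+1),
          ∑ s ∈ Finset.range (r+1+1-u), P u c ∘ₗ P s (μ (r+1-u-s) a b)
          = ∑ s ∈ Finset.range (r+1+1-u), P u c ∘ₗ P (r+1-u-s) (μ s a b) := by
        intro u hu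
        have hu' := Finset.mem_range.mp hu
        rw [show r+1+1-u = (r+1-u)+1 from by omega]
        exact (reflect_pair (r+1-u) (fun x y => P u c ∘ₗ P x (μ y a b))).symm
      rw [Finset.sum_congr rfl hrefl]
      refine (tri_comm (r+1) (fun u s => P u c ∘ₗ P (r+1-u-s) (μ s a b))).trans ?_
      refine Finset.sum_congr rfl fun t ht => Finset.sum_congr rfl fun u hu => ?_
      rw [show r+1-u-t = r+1-t-u from by omega]
    have stepB4 : ∑ t ∈ Finset.range (r+1+1), ∑ u ∈ Finset.range (r+1+1-t),
            P u c ∘ₗ P (r+1-t-u) (μ t a b)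
        = (∑ t ∈ Finset.range (r+1+1), ∑ u ∈ Finset.range (r+1+1-t),
              P u (μ (r+1-t-u) (μ t a b) c))
          - R (μ 0 a b) c := by
      have hinner : ∀ t ∈ Finset.range (r+1+1),
          ∑ u ∈ Finset.range (r+1+1-t), P u c ∘ₗ P (r+1-t-u) (μ t a b)
          = (∑ u ∈ Finset.range (r+1+1-t), P u (μ (r+1-t-u) (μ t a b) c))
            - (if r+1-t = r+1 then R (μ t a b) c else 0) := by
        intro t ht
        have ht' := Finset.mem_range.mp ht
        rw [show r+1+1-t = (r+1-t)+1 from by omega]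
        exact key (r+1-t) (by omega) (μ t a b) c
      rw [Finset.sum_congr rfl hinner, Finset.sum_sub_distrib]
      congr 1
      rw [Finset.sum_eq_single 0]
      · simp
      · intro t ht ht0
        exact if_neg (by have := Finset.mem_range.mp ht; omega)
      · intro h0; exact absurd (Finset.mem_range.mpr (by omega)) h0
    rw [stepB1, stepB2, stepB3, stepB4]
  -- associativity: the two main sums agree
  have hS : (∑ u ∈ Finset.range (r+1+1), ∑ s ∈ Finset.range (r+1+1-u),
          P s (μ (r+1-u-s) a (μ u b c)))
      = ∑ t ∈ Finset.range (r+1+1), ∑ u ∈ Finset.range (r+1+1-t),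
          P u (μ (r+1-t-u) (μ t a b) c) := by
    have hS1 : (∑ u ∈ Finset.range (r+1+1), ∑ s ∈ Finset.range (r+1+1-u),
            P s (μ (r+1-u-s) a (μ u b c)))
        = ∑ i ∈ Finset.range (r+1+1),
            P i (∑ j ∈ Finset.range ((r+1-i)+1), μ j (μ (r+1-i-j) a b) c) := by
      refine (tri_comm (r+1) (fun u s => P s (μ (r+1-u-s) a (μ u b c)))).trans ?_
      refine Finset.sum_congr rfl fun i hi => ?_
      have hi' := Finset.mem_range.mp hi
      rw [show r+1+1-i = (r+1-i)+1 from by omega, map_sum]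
      have hc : ∀ u ∈ Finset.range ((r+1-i)+1),
          P i (μ (r+1-u-i) a (μ u b c)) = P i (μ (r+1-i-u) a (μ u b c)) := by
        intro u hu
        rw [show r+1-u-i = r+1-i-u from by omega]
      rw [Finset.sum_congr rfl hc, ← map_sum, ← map_sum]
      congr 1
      rw [reflect_pair (r+1-i) (fun x y => μ x a (μ y b c))]
      have h := hμ (r+1-i) a b c
      simp only at h
      rw [Finset.sum_sub_distrib, sub_eq_zero] at h
      exact h.symm
    have hS2 : (∑ t ∈ Finset.range (r+1+1), ∑ u ∈ Finset.range (r+1+1-t),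
            P u (μ (r+1-t-u) (μ t a b) c))
        = ∑ i ∈ Finset.range (r+1+1),
            P i (∑ j ∈ Finset.range ((r+1-i)+1), μ j (μ (r+1-i-j) a b) c) := by
      refine (tri_comm (r+1) (fun t u => P u (μ (r+1-t-u) (μ t a b) c))).trans ?_
      refine Finset.sum_congr rfl fun i hi => ?_
      have hi' := Finset.mem_range.mp hi
      rw [show r+1+1-i = (r+1-i)+1 from by omega]
      have hc : ∀ t ∈ Finset.range ((r+1-i)+1),
          P i (μ (r+1-t-i) (μ t a b) c) = P i (μ (r+1-i-t) (μ t a b) c) := by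
        intro t ht
        rw [show r+1-t-i = r+1-i-t from by omega]
      rw [Finset.sum_congr rfl hc, ← map_sum]
      congr 1
      exact reflect_pair (r+1-i) (fun x y => μ x (μ y a b) c)
    exact hS1.trans hS2.symm
  -- combine
  have h := eqI.symm.trans eqII
  rw [hS] at h
  rw [← hP0]
  have h2 : R b c ∘ₗ P 0 a - R (μ 0 a b) c + R a (μ 0 b c) - P 0 c ∘ₗ R a b
      = ((∑ t ∈ Finset.range (r+1+1), ∑ u ∈ Finset.range (r+1+1-t),
            P u (μ (r+1-t-u) (μ t a b) c))
          - R (μ 0 a b) c - P 0 c ∘ₗ R a b)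
        - ((∑ t ∈ Finset.range (r+1+1), ∑ u ∈ Finset.range (r+1+1-t),
            P u (μ (r+1-t-u) (μ t a b) c))
          - R a (μ 0 b c) - R b c ∘ₗ P 0 a) := by abel
  rw [h2, h, sub_self]


/-- Obstruction theory for right-module deformations: if `ρ_0, …, ρ_r`
form a right-module deformation up to order `r` with respect to the associative
deformation `(μ_s)`, then (i) `ρ_0, …, ρ_{r+1}` form a deformation up to order `r+1`
iff `δρ_{r+1} = R_r`, and (ii) `δR_r = 0`. -/
theorem deformation_obstruction_module
    (r : ℕ) (μ : ℕ → A →ₗ[K] A →ₗ[K] A)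
    (hμ : ∀ n, AssocOrder (fun s x y => μ s x y) n)
    (ρ : ℕ → A →ₗ[K] (E →ₗ[K] E))
    (hρ : ∀ n ≤ r, ∀ a b : A,
      ∑ s ∈ Finset.range (n+1), ρ s (μ (n-s) a b)
        = ∑ s ∈ Finset.range (n+1), (ρ s b) ∘ₗ (ρ (n-s) a)) :
    (∀ σ : A →ₗ[K] (E →ₗ[K] E),
      (∀ n ≤ r + 1, ∀ a b : A,
        ∑ s ∈ Finset.range (n+1),
            (if s = r+1 then σ (μ (n-s) a b) else ρ s (μ (n-s) a b))
          = ∑ s ∈ Finset.range (n+1),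
              ((if s = r+1 then σ b else ρ s b) ∘ₗ
                (if n-s = r+1 then σ a else ρ (n-s) a)))
        ↔ (∀ a b : A,
            (σ b) ∘ₗ (ρ 0 a) - σ (μ 0 a b) + (ρ 0 b) ∘ₗ (σ a) = Robs μ ρ r a b))
    ∧ (∀ a b c : A,
        (Robs μ ρ r b c) ∘ₗ (ρ 0 a) - Robs μ ρ r (μ 0 a b) c
          + Robs μ ρ r a (μ 0 b c) - (ρ 0 c) ∘ₗ (Robs μ ρ r a b) = 0) := by
  constructor
  · intro σ
    have hsimpL : ∀ a b : A,
        ∑ s ∈ Finset.range (r+1+1),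
            (if s = r+1 then σ (μ (r+1-s) a b) else ρ s (μ (r+1-s) a b))
        = (∑ s ∈ Finset.range (r+1), ρ s (μ (r+1-s) a b)) + σ (μ 0 a b) := by
      intro a b
      rw [Finset.sum_range_succ, if_pos rfl]
      congr 1
      · refine Finset.sum_congr rfl fun s hs => ?_
        rw [if_neg (by have := Finset.mem_range.mp hs; omega)]
      · rw [Nat.sub_self]
    have hsimpR : ∀ a b : A,
        ∑ s ∈ Finset.range (r+1+1),
            ((if s = r+1 then σ b else ρ s b) ∘ₗ
              (if r+1-s = r+1 then σ a else ρ (r+1-s) a))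
        = ρ 0 b ∘ₗ σ a + (∑ s ∈ Finset.Icc 1 r, ρ s b ∘ₗ ρ (r+1-s) a)
            + σ b ∘ₗ ρ 0 a := by
      intro a b
      rw [Finset.sum_range_succ, Finset.sum_range_succ']
      have htop : (if r+1 = r+1 then σ b else ρ (r+1) b) ∘ₗ
          (if r+1-(r+1) = r+1 then σ a else ρ (r+1-(r+1)) a) = σ b ∘ₗ ρ 0 a := by
        rw [if_pos rfl, if_neg (by omega), Nat.sub_self]
      have hbot : (if 0 = r+1 then σ b else ρ 0 b) ∘ₗ
          (if r+1-0 = r+1 then σ a else ρ (r+1-0) a) = ρ 0 b ∘ₗ σ a := by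
        rw [if_neg (by omega), if_pos (show r+1-0 = r+1 by omega)]
      have hmid : ∀ s ∈ Finset.range r,
          (if s+1 = r+1 then σ b else ρ (s+1) b) ∘ₗ
            (if r+1-(s+1) = r+1 then σ a else ρ (r+1-(s+1)) a)
          = ρ (s+1) b ∘ₗ ρ (r+1-(s+1)) a := by
        intro s hs
        have := Finset.mem_range.mp hs
        rw [if_neg (by omega), if_neg (by omega)]
      rw [htop, hbot, Finset.sum_congr rfl hmid,
        icc_sum r (fun s => ρ s b ∘ₗ ρ (r+1-s) a)]
      abel
    constructor
    · intro H a b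
      have h := H (r+1) le_rfl a b
      rw [hsimpL a b, hsimpR a b] at h
      rw [Robs]
      have h2 : σ b ∘ₗ ρ 0 a - σ (μ 0 a b) + ρ 0 b ∘ₗ σ a
          = (ρ 0 b ∘ₗ σ a + (∑ s ∈ Finset.Icc 1 r, ρ s b ∘ₗ ρ (r+1-s) a)
              + σ b ∘ₗ ρ 0 a)
            - ((∑ s ∈ Finset.range (r+1), ρ s (μ (r+1-s) a b)) + σ (μ 0 a b))
            + ((∑ s ∈ Finset.range (r+1), ρ s (μ (r+1-s) a b))
              - ∑ s ∈ Finset.Icc 1 r, ρ s b ∘ₗ ρ (r+1-s) a) := by abel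
      rw [h2, ← h]
      abel
    · intro H n hn a b
      rcases Nat.lt_or_ge n (r+1) with h | h
      · have hL : ∑ s ∈ Finset.range (n+1),
            (if s = r+1 then σ (μ (n-s) a b) else ρ s (μ (n-s) a b))
            = ∑ s ∈ Finset.range (n+1), ρ s (μ (n-s) a b) := by
          refine Finset.sum_congr rfl fun s hs => ?_
          rw [if_neg (by have := Finset.mem_range.mp hs; omega)]
        have hR : ∑ s ∈ Finset.range (n+1),
            ((if s = r+1 then σ b else ρ s b) ∘ₗ
              (if n-s = r+1 then σ a else ρ (n-s) a))
            = ∑ s ∈ Finset.range (n+1), ρ s b ∘ₗ ρ (n-s) a := by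
          refine Finset.sum_congr rfl fun s hs => ?_
          have := Finset.mem_range.mp hs
          rw [if_neg (by omega), if_neg (by omega)]
        rw [hL, hR]
        exact hρ n (by omega) a b
      · have hn' : n = r+1 := by omega
        subst hn'
        rw [hsimpL a b, hsimpR a b]
        have h := H a b
        rw [Robs] at h
        have h2 : (∑ s ∈ Finset.range (r+1), ρ s (μ (r+1-s) a b)) + σ (μ 0 a b)
            = ((∑ s ∈ Finset.range (r+1), ρ s (μ (r+1-s) a b))
                - ∑ s ∈ Finset.Icc 1 r, ρ s b ∘ₗ ρ (r+1-s) a)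
              - (σ b ∘ₗ ρ 0 a - σ (μ 0 a b) + ρ 0 b ∘ₗ σ a)
              + (ρ 0 b ∘ₗ σ a + (∑ s ∈ Finset.Icc 1 r, ρ s b ∘ₗ ρ (r+1-s) a)
                + σ b ∘ₗ ρ 0 a) := by abel
        rw [h2, ← h]
        abel
  · exact cocycle r μ hμ ρ hρ


end Stmt9
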